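/- Let M(a,b) be the multigraph consisting of two vertices u,v joined by three parallel edges, with a pendant edges at u and b pendant edges at v, where a + b = m − 3. Then φ_{M(a,b)}(x) = x^{m−5}(x⁴ − (m+6)x² + ab). Consequently ρ(M(m−3,0))² = m + 6 and ρ(M(m−4,1))² = (m + 6 + √(m² + 8m + 52))/2. -/

import Mathlib

/-!
The vertices of `M(a,b)` fall into four classes (`u`, `v`, the pendants at `u`, the pendants
at `v`) inside which all vertices have the same neighbours, so `A = P W Pᵀ`, where `W` is the
weighted path `p – u ≡ v – q` (in the order `u, v, p, q`) and `P` is the class-incidence matrix.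
Sylvester's identity relating `φ(XY)` and `φ(YX)` gives `φ_A = x^(n-4) φ_(W PᵀP)`, and
`PᵀP = diag(1, 1, a, b)`, so only a `4 × 4` determinant remains: `x⁴ - (a+b+9)x² + ab`.
Its largest real root comes from the quadratic formula in `x²`.
-/

open Polynomial

/-- Adjacency matrix of the multigraph M(a,b): vertices u = 0 and v = 1 joined by three
parallel edges, a pendant edges at u (vertices 2,…,a+1) and b pendant edges at v
(vertices a+2,…,a+b+1). -/
def Mab (a b : ℕ) : Matrix (Fin (a + b + 2)) (Fin (a + b + 2)) ℝ :=
  Matrix.of fun i j =>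
    if (i.val = 0 ∧ j.val = 1) ∨ (i.val = 1 ∧ j.val = 0) then 3
    else if (i.val = 0 ∧ 2 ≤ j.val ∧ j.val ≤ a + 1) ∨
            (j.val = 0 ∧ 2 ≤ i.val ∧ i.val ≤ a + 1) then 1
    else if (i.val = 1 ∧ a + 2 ≤ j.val) ∨ (j.val = 1 ∧ a + 2 ≤ i.val) then 1
    else 0

open Finset Matrix

namespace Matrix

variable {R : Type*} [CommRing R] {m k : Type*} [Fintype m] [DecidableEq m]
  [Fintype k] [DecidableEq k]

theorem charpoly_submatrix_self (W : Matrix k k R) (π : m → k)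
    (hcard : Fintype.card k ≤ Fintype.card m) :
    (W.submatrix π π).charpoly =
      X ^ (Fintype.card m - Fintype.card k) *
        (W * diagonal fun l => (#{i | π i = l} : R)).charpoly := by
  set P : Matrix m k R := of fun i l => if π i = l then 1 else 0
  have hW : W.submatrix π π = P * (W * Pᵀ) := by
    ext i j : 1
    simp [P, mul_apply]
  have hP : Pᵀ * P = diagonal fun l => (#{i | π i = l} : R) := by
    ext l l'
    simp only [P, mul_apply, transpose_apply, of_apply, diagonal_apply, mul_ite, mul_one, mul_zero]
    split_ifs with h
    · subst h
      simp +contextual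
    · exact sum_eq_zero fun i _ => by grind
  rw [hW, charpoly_mul_comm_of_le _ _ hcard, Matrix.mul_assoc, hP]

end Matrix

theorem Fin.card_filter_val {n : ℕ} (p : ℕ → Prop) [DecidablePred p] :
    #{i : Fin n | p i} = #{k ∈ range n | p k} := by
  rw [card_filter, card_filter, Fin.sum_univ_eq_sum_range (fun k => if p k then 1 else 0)]

namespace Mab

def pattern : Matrix (Fin 4) (Fin 4) ℝ :=
  !![0, 3, 1, 0; 3, 0, 0, 1; 1, 0, 0, 0; 0, 1, 0, 0]

def vertexClass (a k : ℕ) : Fin 4 :=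
  if k = 0 then 0 else if k = 1 then 1 else if k ≤ a + 1 then 2 else 3

theorem eq_submatrix (a b : ℕ) :
    Mab a b = pattern.submatrix (fun i : Fin (a + b + 2) => vertexClass a i)
      (fun i : Fin (a + b + 2) => vertexClass a i) := by
  ext i j
  simp only [Mab, pattern, vertexClass, of_apply, submatrix_apply]
  split_ifs <;> first | omega | simp

theorem card_vertexClass (a b : ℕ) :
    (fun l => (#{i : Fin (a + b + 2) | vertexClass a i = l} : ℝ)) = ![1, 1, (a : ℝ), b] := by
  have hcard (l : Fin 4) (S : Finset ℕ) (hS : ∀ k, k ∈ S ↔ k < a + b + 2 ∧ vertexClass a k = l) :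
      #{i : Fin (a + b + 2) | vertexClass a i = l} = #S := by
    rw [Fin.card_filter_val (vertexClass a · = l)]
    congr 1
    ext k
    simp [hS]
  ext l
  fin_cases l
  · simpa using hcard 0 {0} fun k => by unfold vertexClass; split_ifs <;> simp <;> omega
  · simpa using hcard 1 {1} fun k => by unfold vertexClass; split_ifs <;> simp <;> omega
  · simpa using hcard 2 (Icc 2 (a + 1)) fun k => by
      unfold vertexClass; split_ifs <;> simp <;> omega
  · simpa using hcard 3 (Icc (a + 2) (a + b + 1)) fun k => by
      unfold vertexClass; split_ifs <;> simp <;> omega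

theorem charpoly_pattern_mul_diagonal (a b : ℝ) :
    (pattern * diagonal ![1, 1, a, b]).charpoly =
      X ^ 4 - C (a + b + 9) * X ^ 2 + C (a * b) := by
  have h : charmatrix (pattern * diagonal ![1, 1, a, b]) =
      !![X, -C 3, -C a, 0; -C 3, X, 0, -C b; -1, 0, X, 0; 0, -1, 0, X] := by
    ext i j : 1
    fin_cases i <;> fin_cases j <;> simp [pattern, vecMul_diagonal]
  rw [Matrix.charpoly, h, det_succ_row_zero]
  simp [Fin.sum_univ_succ, det_succ_row_zero, Fin.succAbove, map_ofNat]
  ring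

theorem charpoly_eq (a b : ℕ) (h : 2 ≤ a + b) :
    (Mab a b).charpoly =
      X ^ (a + b - 2) * (X ^ 4 - C ((a : ℝ) + b + 9) * X ^ 2 + C ((a : ℝ) * b)) := by
  rw [eq_submatrix, charpoly_submatrix_self _ _ (by simp only [Fintype.card_fin]; omega),
    card_vertexClass, charpoly_pattern_mul_diagonal, Fintype.card_fin, Fintype.card_fin,
    show a + b + 2 - 4 = a + b - 2 by omega]

end Mab

theorem isGreatest_setOf_isRoot_X_pow_mul_biquadratic (k : ℕ) {s p : ℝ} (hs : 0 ≤ s)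
    (hdisc : 4 * p ≤ s ^ 2) :
    IsGreatest {x : ℝ | (X ^ k * (X ^ 4 - C s * X ^ 2 + C p)).IsRoot x}
      √((s + √(s ^ 2 - 4 * p)) / 2) := by
  set d := √(s ^ 2 - 4 * p)
  have hd : d ^ 2 = s ^ 2 - 4 * p := Real.sq_sqrt (by linarith)
  have hd0 : 0 ≤ d := Real.sqrt_nonneg _
  have hfactor (y : ℝ) :
      y ^ 4 - s * y ^ 2 + p = (y ^ 2 - (s + d) / 2) * (y ^ 2 - (s - d) / 2) := by
    linear_combination hd / 4
  simp only [upperBounds, Set.mem_ofPred_eq, IsGreatest, IsRoot.def, eval_mul, eval_pow, eval_X,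
    eval_add, eval_sub, eval_C]
  refine ⟨?_, fun x hx => ?_⟩
  · rw [hfactor, Real.sq_sqrt (by positivity)]
    ring
  · rcases mul_eq_zero.1 hx with hx | hx
    · rw [eq_zero_of_pow_eq_zero hx]
      positivity
    · rw [hfactor] at hx
      have hx2 : x ^ 2 ≤ (s + d) / 2 := by
        rcases mul_eq_zero.1 hx with hx | hx <;> linarith
      exact (le_abs_self x).trans (Real.abs_le_sqrt hx2)

/-- φ_{M(a,b)}(x) = x^{m-5}(x⁴ - (m+6)x² + ab), and consequently
ρ(M(m-3,0))² = m+6 and ρ(M(m-4,1))² = (m + 6 + √(m² + 8m + 52))/2. -/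
theorem stmt_8 (a b m : ℕ) (hm : m = a + b + 3) (h5 : 5 ≤ m) :
    (Mab a b).charpoly =
      X ^ (m - 5) * (X ^ 4 - C ((m : ℝ) + 6) * X ^ 2 + C ((a : ℝ) * b)) ∧
    IsGreatest {x : ℝ | (Mab (m - 3) 0).charpoly.IsRoot x}
      (Real.sqrt ((m : ℝ) + 6)) ∧
    IsGreatest {x : ℝ | (Mab (m - 4) 1).charpoly.IsRoot x}
      (Real.sqrt (((m : ℝ) + 6 + Real.sqrt ((m : ℝ) ^ 2 + 8 * m + 52)) / 2)) := by
  have hchar (a' b' : ℕ) (h : a' + b' + 3 = m) : (Mab a' b').charpoly =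
      X ^ (m - 5) * (X ^ 4 - C ((m : ℝ) + 6) * X ^ 2 + C ((a' : ℝ) * b')) := by
    subst h
    rw [Mab.charpoly_eq a' b' (by omega), show a' + b' + 3 - 5 = a' + b' - 2 by omega]
    push_cast
    ring_nf
  have hm6 : (0 : ℝ) ≤ m + 6 := by positivity
  refine ⟨hchar a b hm.symm, ?_, ?_⟩
  · rw [hchar _ _ (by omega)]
    convert isGreatest_setOf_isRoot_X_pow_mul_biquadratic (m - 5) hm6 _ using 1
    · simp [Real.sqrt_sq hm6]
    · simp [sq_nonneg]
  · rw [hchar _ _ (by omega)]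
    convert isGreatest_setOf_isRoot_X_pow_mul_biquadratic (m - 5) hm6 _ using 1
    · push_cast [show 4 ≤ m by omega]
      ring_nf
    · push_cast [show 4 ≤ m by omega]
      nlinarith
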